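/- Let α > 0. Then there exist positive reals ε, γ̄, λ₁, λ₂ with λ₁ > 0, λ₂ > 0, ε < α − γ̄, and ε > λ₁·C² + γ̄ (for any fixed constant C > 0), such that the 4×4 symmetric matrix M₀ with rows (λ₁, 0, −αε/2, 0), (0, α − ε − γ̄, −α/2, 0), (−αε/2, −α/2, λ₂, 0), (0, 0, 0, ε − λ₁C² − γ̄) is positive definite. -/

import Mathlib

/-!
Completing the square in the first two coordinates writes the quadratic form of a matrix
`!![p, 0, x, 0; 0, q, y, 0; x, y, t, 0; 0, 0, 0, u]` with `p, q, u > 0` as a sum of squares with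
weights `p`, `q`, `u` and the Schur complement `t - x² / p - y² / q`; so the matrix is positive
definite as soon as that complement is positive. For `M₀`, the choice `ε = α / 2`, `γ̄ = α / 8`,
`λ₁ C² = α / 8` satisfies the linear constraints, and `λ₂` is then taken one more than the
resulting value of `x² / p + y² / q`.
-/

open Matrix

theorem quadForm_pos_of_schur_lt {p q t u x y : ℝ} (hp : 0 < p) (hq : 0 < q) (hu : 0 < u)
    (hschur : x ^ 2 / p + y ^ 2 / q < t) {v : Fin 4 → ℝ} (hv : v ≠ 0) :
    0 < p * v 0 ^ 2 + q * v 1 ^ 2 + t * v 2 ^ 2 + u * v 3 ^ 2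
      + 2 * x * v 0 * v 2 + 2 * y * v 1 * v 2 := by
  set s := t - x ^ 2 / p - y ^ 2 / q
  have hs : 0 < s := by simp only [s]; linarith
  have hsq : p * v 0 ^ 2 + q * v 1 ^ 2 + t * v 2 ^ 2 + u * v 3 ^ 2
      + 2 * x * v 0 * v 2 + 2 * y * v 1 * v 2
      = p * (v 0 + x / p * v 2) ^ 2 + q * (v 1 + y / q * v 2) ^ 2 + s * v 2 ^ 2
        + u * v 3 ^ 2 := by
    simp only [s]; field_simp; ring
  rw [hsq]
  by_contra! hle
  have h0 := mul_nonneg hp.le (sq_nonneg (v 0 + x / p * v 2))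
  have h1 := mul_nonneg hq.le (sq_nonneg (v 1 + y / q * v 2))
  have h2 := mul_nonneg hs.le (sq_nonneg (v 2))
  have h3 := mul_nonneg hu.le (sq_nonneg (v 3))
  have hv2 : v 2 = 0 := by simpa [hs.ne'] using (by linarith : s * v 2 ^ 2 = 0)
  have hv3 : v 3 = 0 := by simpa [hu.ne'] using (by linarith : u * v 3 ^ 2 = 0)
  have hv0 : v 0 = 0 := by
    simpa [hp.ne', hv2] using (by linarith : p * (v 0 + x / p * v 2) ^ 2 = 0)
  have hv1 : v 1 = 0 := by
    simpa [hq.ne', hv2] using (by linarith : q * (v 1 + y / q * v 2) ^ 2 = 0)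
  exact hv (by ext i; fin_cases i <;> assumption)

theorem posDef_of_schur_lt {p q t u x y : ℝ} (hp : 0 < p) (hq : 0 < q) (hu : 0 < u)
    (hschur : x ^ 2 / p + y ^ 2 / q < t) :
    (!![p, 0, x, 0; 0, q, y, 0; x, y, t, 0; 0, 0, 0, u] : Matrix (Fin 4) (Fin 4) ℝ).PosDef := by
  refine posDef_iff_dotProduct_mulVec.mpr ⟨?_, fun v hv => ?_⟩
  · ext i j
    fin_cases i <;> fin_cases j <;> simp
  · refine (quadForm_pos_of_schur_lt hp hq hu hschur hv).trans_eq ?_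
    simp [mulVec, dotProduct, Fin.sum_univ_four]
    ring

theorem feasibility_delta_zero (α C : ℝ) (hα : 0 < α) (hC : 0 < C) :
    ∃ ε γbar lam1 lam2 : ℝ, 0 < ε ∧ 0 < γbar ∧ 0 < lam1 ∧ 0 < lam2 ∧
      ε < α - γbar ∧ ε > lam1 * C ^ 2 + γbar ∧
      (!![lam1, 0, -(α * ε) / 2, 0;
         0, α - ε - γbar, -α / 2, 0;
         -(α * ε) / 2, -α / 2, lam2, 0;
         0, 0, 0, ε - lam1 * C ^ 2 - γbar] : Matrix (Fin 4) (Fin 4) ℝ).PosDef := by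
  set ε := α / 2
  set γbar := α / 8
  set lam1 := α / (8 * C ^ 2)
  have hlam1 : lam1 * C ^ 2 = α / 8 := by simp only [lam1]; field_simp
  have hlam1_pos : 0 < lam1 := by positivity
  have hq : 0 < α - ε - γbar := by simp only [ε, γbar]; linarith
  have hu : 0 < ε - lam1 * C ^ 2 - γbar := by simp only [ε, γbar, hlam1]; linarith
  refine ⟨ε, γbar, lam1, (-(α * ε) / 2) ^ 2 / lam1 + (-α / 2) ^ 2 / (α - ε - γbar) + 1,
    by positivity, by positivity, hlam1_pos, by positivity, by linarith, by linarith,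
    posDef_of_schur_lt hlam1_pos hq hu (lt_add_one _)⟩
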